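/- arXiv:1211.5449 — 5 statements merged into one kernel-verified Lean document; each statement's English description precedes it below -/
import Mathlib

section
/- Let P, Q ∈ PP(n) with P ≤ Q, both realized on {1,…,n} with the usual total order. Then there exist plane posets P = P_0, P_1, …, P_k = Q on {1,…,n} such that P_0 ⪯ P_1 ⪯ … ⪯ P_k, where R ⪯ S means that there exists (i,j) ∈ E(R) with E(S) = E(R) ∖ {(i,j)}. -/
open scoped TensorProduct
open scoped Classical

noncomputable section

/-- A plane poset structure on a set `α`: two partial orders `≤_h` (`hle`) and `≤_r` (`rle`)
such that two distinct elements are comparable for `≤_h` if and only if they are not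
comparable for `≤_r`. -/
structure PlanePoset (α : Type) where
  hle : α → α → Prop
  rle : α → α → Prop
  hle_refl : ∀ x, hle x x
  hle_antisymm : ∀ x y, hle x y → hle y x → x = y
  hle_trans : ∀ x y z, hle x y → hle y z → hle x z
  rle_refl : ∀ x, rle x x
  rle_antisymm : ∀ x y, rle x y → rle y x → x = y
  rle_trans : ∀ x y z, rle x y → rle y z → rle x z
  compat : ∀ x y, x ≠ y → ((hle x y ∨ hle y x) ↔ ¬ (rle x y ∨ rle y x))

namespace PlanePoset

variable {α β : Type}

/-- The induced (total) order `x ≤ y iff x ≤_h y or x ≤_r y`. -/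
def tle (P : PlanePoset α) (x y : α) : Prop := P.hle x y ∨ P.rle x y

/-- Transport of a plane poset structure along a bijection. -/
def map (e : α ≃ β) (P : PlanePoset α) : PlanePoset β where
  hle x y := P.hle (e.symm x) (e.symm y)
  rle x y := P.rle (e.symm x) (e.symm y)
  hle_refl x := P.hle_refl _
  hle_antisymm x y h1 h2 := e.symm.injective (P.hle_antisymm _ _ h1 h2)
  hle_trans x y z h1 h2 := P.hle_trans _ _ _ h1 h2
  rle_refl x := P.rle_refl _
  rle_antisymm x y h1 h2 := e.symm.injective (P.rle_antisymm _ _ h1 h2)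
  rle_trans x y z h1 h2 := P.rle_trans _ _ _ h1 h2
  compat x y hxy := P.compat _ _ fun h => hxy (e.symm.injective h)

@[simp] theorem map_hle (e : α ≃ β) (P : PlanePoset α) (x y : β) :
    (P.map e).hle x y ↔ P.hle (e.symm x) (e.symm y) := Iff.rfl

@[simp] theorem map_rle (e : α ≃ β) (P : PlanePoset α) (x y : β) :
    (P.map e).rle x y ↔ P.rle (e.symm x) (e.symm y) := Iff.rfl

/-- The composition `PQ` of two plane posets: `x ≤_r y` for every `x ∈ P`, `y ∈ Q`. -/
def comp (P : PlanePoset α) (Q : PlanePoset β) : PlanePoset (α ⊕ β) where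
  hle x y :=
    match x, y with
    | Sum.inl a, Sum.inl b => P.hle a b
    | Sum.inr a, Sum.inr b => Q.hle a b
    | _, _ => False
  rle x y :=
    match x, y with
    | Sum.inl a, Sum.inl b => P.rle a b
    | Sum.inr a, Sum.inr b => Q.rle a b
    | Sum.inl _, Sum.inr _ => True
    | Sum.inr _, Sum.inl _ => False
  hle_refl := by
    rintro (a | a)
    · exact P.hle_refl a
    · exact Q.hle_refl a
  hle_antisymm := by
    rintro (a | a) (b | b) h1 h2
    · exact congrArg Sum.inl (P.hle_antisymm a b h1 h2)
    · exact h1.elim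
    · exact h1.elim
    · exact congrArg Sum.inr (Q.hle_antisymm a b h1 h2)
  hle_trans := by
    rintro (a | a) (b | b) (c | c) h1 h2 <;>
      first
        | exact P.hle_trans _ _ _ h1 h2
        | exact Q.hle_trans _ _ _ h1 h2
        | exact h1.elim
        | exact h2.elim
  rle_refl := by
    rintro (a | a)
    · exact P.rle_refl a
    · exact Q.rle_refl a
  rle_antisymm := by
    rintro (a | a) (b | b) h1 h2
    · exact congrArg Sum.inl (P.rle_antisymm a b h1 h2)
    · exact h2.elim
    · exact h1.elim
    · exact congrArg Sum.inr (Q.rle_antisymm a b h1 h2)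
  rle_trans := by
    rintro (a | a) (b | b) (c | c) h1 h2 <;>
      first
        | exact P.rle_trans _ _ _ h1 h2
        | exact Q.rle_trans _ _ _ h1 h2
        | exact h1.elim
        | exact h2.elim
        | trivial
  compat := by
    rintro (a | a) (b | b) hne
    · exact P.compat a b fun h => hne (congrArg Sum.inl h)
    · show (False ∨ False) ↔ ¬ (True ∨ False)
      simp
    · show (False ∨ False) ↔ ¬ (False ∨ True)
      simp
    · exact Q.compat a b fun h => hne (congrArg Sum.inr h)

/-- The product `P ▷ Q` of two plane posets: `x ≤_h y` for every `x ∈ P`, `y ∈ Q`. -/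
def hcomp (P : PlanePoset α) (Q : PlanePoset β) : PlanePoset (α ⊕ β) where
  hle x y :=
    match x, y with
    | Sum.inl a, Sum.inl b => P.hle a b
    | Sum.inr a, Sum.inr b => Q.hle a b
    | Sum.inl _, Sum.inr _ => True
    | Sum.inr _, Sum.inl _ => False
  rle x y :=
    match x, y with
    | Sum.inl a, Sum.inl b => P.rle a b
    | Sum.inr a, Sum.inr b => Q.rle a b
    | _, _ => False
  hle_refl := by
    rintro (a | a)
    · exact P.hle_refl a
    · exact Q.hle_refl a
  hle_antisymm := by
    rintro (a | a) (b | b) h1 h2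
    · exact congrArg Sum.inl (P.hle_antisymm a b h1 h2)
    · exact h2.elim
    · exact h1.elim
    · exact congrArg Sum.inr (Q.hle_antisymm a b h1 h2)
  hle_trans := by
    rintro (a | a) (b | b) (c | c) h1 h2 <;>
      first
        | exact P.hle_trans _ _ _ h1 h2
        | exact Q.hle_trans _ _ _ h1 h2
        | exact h1.elim
        | exact h2.elim
        | trivial
  rle_refl := by
    rintro (a | a)
    · exact P.rle_refl a
    · exact Q.rle_refl a
  rle_antisymm := by
    rintro (a | a) (b | b) h1 h2
    · exact congrArg Sum.inl (P.rle_antisymm a b h1 h2)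
    · exact h1.elim
    · exact h1.elim
    · exact congrArg Sum.inr (Q.rle_antisymm a b h1 h2)
  rle_trans := by
    rintro (a | a) (b | b) (c | c) h1 h2 <;>
      first
        | exact P.rle_trans _ _ _ h1 h2
        | exact Q.rle_trans _ _ _ h1 h2
        | exact h1.elim
        | exact h2.elim
  compat := by
    rintro (a | a) (b | b) hne
    · exact P.compat a b fun h => hne (congrArg Sum.inl h)
    · show (True ∨ False) ↔ ¬ (False ∨ False)
      simp
    · show (False ∨ True) ↔ ¬ (False ∨ False)
      simp
    · exact Q.compat a b fun h => hne (congrArg Sum.inr h)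

/-- Restriction of a plane poset to a subset (a plane subposet). -/
def res (P : PlanePoset α) (s : Finset α) : PlanePoset {x : α // x ∈ s} where
  hle x y := P.hle x.1 y.1
  rle x y := P.rle x.1 y.1
  hle_refl x := P.hle_refl _
  hle_antisymm x y h1 h2 := Subtype.ext (P.hle_antisymm _ _ h1 h2)
  hle_trans x y z h1 h2 := P.hle_trans _ _ _ h1 h2
  rle_refl x := P.rle_refl _
  rle_antisymm x y h1 h2 := Subtype.ext (P.rle_antisymm _ _ h1 h2)
  rle_trans x y z h1 h2 := P.rle_trans _ _ _ h1 h2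
  compat x y hxy := P.compat _ _ fun h => hxy (Subtype.ext h)

/-- The involution `ι` exchanging the two partial orders. -/
def swap (P : PlanePoset α) : PlanePoset α where
  hle := P.rle
  rle := P.hle
  hle_refl := P.rle_refl
  hle_antisymm := P.rle_antisymm
  hle_trans := P.rle_trans
  rle_refl := P.hle_refl
  rle_antisymm := P.hle_antisymm
  rle_trans := P.hle_trans
  compat x y hxy := by
    have h := P.compat x y hxy
    tauto

end PlanePoset

/-- A plane poset structure on `Fin n` is canonical when the induced total order
is the usual order on `{1, …, n}`. -/
def IsCanon {n : ℕ} (P : PlanePoset (Fin n)) : Prop :=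
  ∀ x y : Fin n, (P.hle x y ∨ P.rle x y) ↔ x ≤ y

/-- `PP(n)`: (isoclasses of) plane posets of cardinality `n`, realized as the canonical
plane poset structures on `{1, …, n}`. -/
def CanonPP (n : ℕ) : Type := { P : PlanePoset (Fin n) // IsCanon P }

namespace CanonPP

/-- The empty plane poset, unit of both products. -/
def one : CanonPP 0 :=
  ⟨{ hle := fun _ _ => True
     rle := fun _ _ => True
     hle_refl := fun _ => trivial
     hle_antisymm := fun x => x.elim0
     hle_trans := fun _ _ _ _ _ => trivial
     rle_refl := fun _ => trivial
     rle_antisymm := fun x => x.elim0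
     rle_trans := fun _ _ _ _ _ => trivial
     compat := fun x => x.elim0 }, fun x => x.elim0⟩

/-- The composition `PQ` of plane posets, realized canonically. -/
def comp {k l : ℕ} (P : CanonPP k) (Q : CanonPP l) : CanonPP (k + l) :=
  ⟨(P.1.comp Q.1).map finSumFinEquiv, by
    intro x y
    obtain ⟨a, rfl⟩ := finSumFinEquiv.surjective x
    obtain ⟨b, rfl⟩ := finSumFinEquiv.surjective y
    simp only [PlanePoset.map_hle, PlanePoset.map_rle, Equiv.symm_apply_apply]
    rcases a with a | a <;> rcases b with b | b
    · show (P.1.hle a b ∨ P.1.rle a b) ↔ _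
      rw [P.2 a b, finSumFinEquiv_apply_left, finSumFinEquiv_apply_left]
      simp only [Fin.le_def, Fin.coe_castAdd]
      try omega
    · show (False ∨ True) ↔ _
      rw [finSumFinEquiv_apply_left, finSumFinEquiv_apply_right]
      have ha := a.isLt
      simp only [false_or, true_iff, Fin.le_def, Fin.coe_castAdd, Fin.coe_natAdd]
      omega
    · show (False ∨ False) ↔ _
      rw [finSumFinEquiv_apply_right, finSumFinEquiv_apply_left]
      have hb := b.isLt
      simp only [or_self, false_iff, Fin.le_def, Fin.coe_natAdd, Fin.coe_castAdd]
      omega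
    · show (Q.1.hle a b ∨ Q.1.rle a b) ↔ _
      rw [Q.2 a b, finSumFinEquiv_apply_right, finSumFinEquiv_apply_right]
      simp only [Fin.le_def, Fin.coe_natAdd]
      omega⟩

/-- The product `P ▷ Q` of plane posets, realized canonically. -/
def hcomp {k l : ℕ} (P : CanonPP k) (Q : CanonPP l) : CanonPP (k + l) :=
  ⟨(P.1.hcomp Q.1).map finSumFinEquiv, by
    intro x y
    obtain ⟨a, rfl⟩ := finSumFinEquiv.surjective x
    obtain ⟨b, rfl⟩ := finSumFinEquiv.surjective y
    simp only [PlanePoset.map_hle, PlanePoset.map_rle, Equiv.symm_apply_apply]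
    rcases a with a | a <;> rcases b with b | b
    · show (P.1.hle a b ∨ P.1.rle a b) ↔ _
      rw [P.2 a b, finSumFinEquiv_apply_left, finSumFinEquiv_apply_left]
      simp only [Fin.le_def, Fin.coe_castAdd]
      try omega
    · show (True ∨ False) ↔ _
      rw [finSumFinEquiv_apply_left, finSumFinEquiv_apply_right]
      have ha := a.isLt
      simp only [or_false, true_iff, Fin.le_def, Fin.coe_castAdd, Fin.coe_natAdd]
      omega
    · show (False ∨ False) ↔ _
      rw [finSumFinEquiv_apply_right, finSumFinEquiv_apply_left]
      have hb := b.isLt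
      simp only [or_self, false_iff, Fin.le_def, Fin.coe_natAdd, Fin.coe_castAdd]
      omega
    · show (Q.1.hle a b ∨ Q.1.rle a b) ↔ _
      rw [Q.2 a b, finSumFinEquiv_apply_right, finSumFinEquiv_apply_right]
      simp only [Fin.le_def, Fin.coe_natAdd]
      omega⟩

/-- Restriction of a plane poset to a plane subposet, realized canonically via the unique
increasing bijection. -/
def restrict {n : ℕ} (P : CanonPP n) (s : Finset (Fin n)) : CanonPP s.card :=
  ⟨(P.1.res s).map (s.orderIsoOfFin rfl).toEquiv.symm, by
    intro i j
    simp only [PlanePoset.map_hle, PlanePoset.map_rle, Equiv.symm_symm]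
    show (P.1.hle ((s.orderIsoOfFin rfl).toEquiv i).1 ((s.orderIsoOfFin rfl).toEquiv j).1 ∨
          P.1.rle ((s.orderIsoOfFin rfl).toEquiv i).1 ((s.orderIsoOfFin rfl).toEquiv j).1) ↔ i ≤ j
    rw [P.2]
    rw [Subtype.coe_le_coe]
    exact (s.orderIsoOfFin rfl).le_iff_le⟩

/-- The involution `ι`, on canonical plane posets. -/
def iota {n : ℕ} (P : CanonPP n) : CanonPP n :=
  ⟨P.1.swap, fun x y => by rw [or_comm]; exact P.2 x y⟩

end CanonPP

/-- The partial (weak Bruhat) order on `PP(n)`: `P ≤ Q` iff `x ≤_h y` in `Q` implies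
`x ≤_h y` in `P` (the increasing bijection between canonical representatives being
the identity). -/
def PPle {n : ℕ} (P Q : CanonPP n) : Prop :=
  ∀ x y : Fin n, Q.1.hle x y → P.1.hle x y

/-- Strict version of the order on `PP(n)`. -/
def PPlt {n : ℕ} (P Q : CanonPP n) : Prop := PPle P Q ∧ P ≠ Q

/-- Covering relation of the poset `(PP(n), ≤)`. -/
def PPcovBy {n : ℕ} (P Q : CanonPP n) : Prop :=
  PPlt P Q ∧ ∀ T : CanonPP n, PPlt P T → ¬ PPlt T Q

/-- `E(P) = {(i,j) | i <_h j}`. -/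
def Eset {n : ℕ} (P : CanonPP n) : Set (Fin n × Fin n) :=
  {p | P.1.hle p.1 p.2 ∧ p.1 ≠ p.2}

/-- A biideal of a plane poset: an ideal for both partial orders, equivalently an ideal
for the induced total order. -/
def IsBiideal {n : ℕ} (P : CanonPP n) (I : Finset (Fin n)) : Prop :=
  ∀ x y : Fin n, x ∈ I → (P.1.hle x y ∨ P.1.rle x y) → y ∈ I

/-- `h_s^t = #{(x,y) ∈ s × t | x <_h y}`. -/
def hNum {n : ℕ} (P : CanonPP n) (s t : Finset (Fin n)) : ℕ :=
  ((s ×ˢ t).filter (fun p : Fin n × Fin n => P.1.hle p.1 p.2 ∧ p.1 ≠ p.2)).card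

/-- `φ(P,Q) = #{(x,y) | x <_r y in P and x <_h y in Q} + #{(x,y) | x <_h y in P and
x <_r y in Q}` (via the identity increasing bijection). -/
def phi {n : ℕ} (P Q : CanonPP n) : ℕ :=
  (Finset.univ.filter (fun p : Fin n × Fin n =>
      (P.1.rle p.1 p.2 ∧ p.1 ≠ p.2) ∧ (Q.1.hle p.1 p.2 ∧ p.1 ≠ p.2))).card +
  (Finset.univ.filter (fun p : Fin n × Fin n =>
      (P.1.hle p.1 p.2 ∧ p.1 ≠ p.2) ∧ (Q.1.rle p.1 p.2 ∧ p.1 ≠ p.2))).card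

/-- The level `ℓ(P) = #{(x,y) | x <_r y}`. -/
def level {n : ℕ} (P : CanonPP n) : ℕ :=
  (Finset.univ.filter (fun p : Fin n × Fin n => P.1.rle p.1 p.2 ∧ p.1 ≠ p.2)).card

/-- The plane poset `P_σ = Ψ_n(σ)` associated to a permutation `σ`. -/
def PsiPerm {n : ℕ} (σ : Equiv.Perm (Fin n)) : CanonPP n :=
  ⟨{ hle := fun i j => i ≤ j ∧ σ.symm i ≤ σ.symm j
     rle := fun i j => i ≤ j ∧ σ.symm j ≤ σ.symm i
     hle_refl := fun x => ⟨le_refl x, le_refl _⟩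
     hle_antisymm := fun x y h1 h2 => le_antisymm h1.1 h2.1
     hle_trans := fun x y z h1 h2 => ⟨le_trans h1.1 h2.1, le_trans h1.2 h2.2⟩
     rle_refl := fun x => ⟨le_refl x, le_refl _⟩
     rle_antisymm := fun x y h1 h2 => le_antisymm h1.1 h2.1
     rle_trans := fun x y z h1 h2 => ⟨le_trans h1.1 h2.1, le_trans h2.2 h1.2⟩
     compat := by
       intro x y hxy
       have h1 : (x : ℕ) ≠ (y : ℕ) := fun h => hxy (Fin.ext h)
       have h2 : ((σ.symm x : Fin n) : ℕ) ≠ ((σ.symm y : Fin n) : ℕ) :=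
         fun h => hxy (σ.symm.injective (Fin.ext h))
       simp only [Fin.le_def]
       omega },
   by
     intro x y
     show ((x ≤ y ∧ σ.symm x ≤ σ.symm y) ∨ (x ≤ y ∧ σ.symm y ≤ σ.symm x)) ↔ x ≤ y
     simp only [Fin.le_def]
     omega⟩

/-- One step of the weak Bruhat order: exchange two consecutive letters `i < j`
(`i` appearing immediately before `j`) in the word `σ(1) ⋯ σ(n)`. -/
def bruhatStep {n : ℕ} (σ τ : Equiv.Perm (Fin n)) : Prop :=
  ∃ (i j k : Fin n) (hk : (k : ℕ) + 1 < n),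
    i < j ∧ σ k = i ∧ σ ⟨(k : ℕ) + 1, hk⟩ = j ∧ τ = Equiv.swap i j * σ

/-- The set of (isoclasses of) plane posets. -/
abbrev PPS : Type := Σ n : ℕ, CanonPP n

/-- Composition product on plane posets. -/
def PPS.comp (P Q : PPS) : PPS := ⟨P.1 + Q.1, P.2.comp Q.2⟩

/-- The product `▷` on plane posets. -/
def PPS.hcomp (P Q : PPS) : PPS := ⟨P.1 + Q.1, P.2.hcomp Q.2⟩

/-- Value of the coproduct `Δ_q` on a plane poset:
`Δ_q(P) = Σ_{I biideal of P} q^{h_{P∖I}^I} (P∖I) ⊗ I`. -/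
def deltaOn (K : Type) [Field K] (q : K) {n : ℕ} (P : CanonPP n) :
    (PPS →₀ K) ⊗[K] (PPS →₀ K) :=
  ∑ I ∈ Finset.univ.filter (fun I : Finset (Fin n) => IsBiideal P I),
    q ^ hNum P Iᶜ I •
      (Finsupp.single (⟨Iᶜ.card, P.restrict Iᶜ⟩ : PPS) (1 : K) ⊗ₜ[K]
        Finsupp.single (⟨I.card, P.restrict I⟩ : PPS) (1 : K))

/-- The coproduct `Δ_q` on `h_PP`, extended linearly. -/
def Delta (K : Type) [Field K] (q : K) :
    (PPS →₀ K) →ₗ[K] (PPS →₀ K) ⊗[K] (PPS →₀ K) :=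
  Finsupp.lift _ K PPS fun P => deltaOn K q P.2

/-- The composition product `m`, extended bilinearly to `h_PP`. -/
def mulPP (K : Type) [Field K] : (PPS →₀ K) →ₗ[K] (PPS →₀ K) →ₗ[K] (PPS →₀ K) :=
  Finsupp.lift _ K PPS fun P =>
    Finsupp.lift _ K PPS fun Q => Finsupp.single (PPS.comp P Q) 1

/-- The componentwise product on `h_PP ⊗ h_PP`. -/
def mulT (K : Type) [Field K] :
    ((PPS →₀ K) ⊗[K] (PPS →₀ K)) →ₗ[K] ((PPS →₀ K) ⊗[K] (PPS →₀ K)) →ₗ[K]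
      ((PPS →₀ K) ⊗[K] (PPS →₀ K)) :=
  TensorProduct.map₂ (mulPP K) (mulPP K)

/-- Multiplication of the basis element of a plane poset by `q^{n·c}` where `n` is its
cardinality. -/
def scale (K : Type) [Field K] (q : K) (c : ℕ) : (PPS →₀ K) →ₗ[K] (PPS →₀ K) :=
  Finsupp.lift _ K PPS fun P => q ^ (P.1 * c) • Finsupp.single P 1

/-- Right multiplication by a plane poset for the product `▷`. -/
def rmulH (K : Type) [Field K] (Q : PPS) : (PPS →₀ K) →ₗ[K] (PPS →₀ K) :=
  Finsupp.lift _ K PPS fun P => Finsupp.single (PPS.hcomp P Q) 1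

/-- Left multiplication by a plane poset for the product `▷`. -/
def lmulH (K : Type) [Field K] (P : PPS) : (PPS →₀ K) →ₗ[K] (PPS →₀ K) :=
  Finsupp.lift _ K PPS fun Q => Finsupp.single (PPS.hcomp P Q) 1

/-- The pairing on plane posets of the same cardinality:
`⟨P,Q⟩_q = q^{φ(P,Q)}` if `ι(P) ≤ Q`, and `0` otherwise. -/
def pairN (K : Type) [Field K] (q : K) {n : ℕ} (P Q : CanonPP n) : K :=
  if PPle (CanonPP.iota P) Q then q ^ phi P Q else 0

/-- The pairing `⟨-,-⟩_q` on plane posets (zero on posets of different cardinalities). -/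
def pairPP (K : Type) [Field K] (q : K) (P Q : PPS) : K :=
  if h : P.1 = Q.1 then pairN K q (cast (congrArg CanonPP h) P.2) Q.2 else 0

/-- The pairing `⟨-,-⟩_q`, extended bilinearly to `h_PP`. -/
def Bform (K : Type) [Field K] (q : K) : (PPS →₀ K) →ₗ[K] (PPS →₀ K) →ₗ[K] K :=
  Finsupp.lift _ K PPS fun P => Finsupp.lift K K PPS fun Q => pairPP K q P Q

end

section Statement8Aux

variable {n : ℕ}

theorem PlanePoset.ext' {α : Type} {P Q : PlanePoset α}
    (h1 : P.hle = Q.hle) (h2 : P.rle = Q.rle) : P = Q := by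
  cases P; cases Q
  cases h1; cases h2
  rfl

theorem s8_eset_lt (P : CanonPP n) {x y : Fin n} (h : (x, y) ∈ Eset P) : x < y :=
  lt_of_le_of_ne ((P.2 x y).mp (Or.inl h.1)) h.2

theorem s8_eset_trans (P : CanonPP n) {x y z : Fin n}
    (h1 : (x, y) ∈ Eset P) (h2 : (y, z) ∈ Eset P) : (x, z) ∈ Eset P :=
  ⟨P.1.hle_trans _ _ _ h1.1 h2.1, ne_of_lt (lt_trans (s8_eset_lt P h1) (s8_eset_lt P h2))⟩

theorem s8_hle_iff (P : CanonPP n) (x y : Fin n) :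
    P.1.hle x y ↔ x = y ∨ (x, y) ∈ Eset P := by
  constructor
  · intro h
    by_cases hxy : x = y
    · exact Or.inl hxy
    · exact Or.inr ⟨h, hxy⟩
  · rintro (rfl | ⟨h, -⟩)
    · exact P.1.hle_refl x
    · exact h

theorem s8_rle_iff (P : CanonPP n) (x y : Fin n) :
    P.1.rle x y ↔ x = y ∨ (x < y ∧ (x, y) ∉ Eset P) := by
  constructor
  · intro h
    by_cases hxy : x = y
    · exact Or.inl hxy
    · refine Or.inr ⟨lt_of_le_of_ne ((P.2 x y).mp (Or.inr h)) hxy, fun hE => ?_⟩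
      exact ((P.1.compat x y hxy).mp (Or.inl hE.1)) (Or.inl h)
  · rintro (rfl | ⟨hlt, hE⟩)
    · exact P.1.rle_refl x
    · have hne : x ≠ y := ne_of_lt hlt
      have htot := (P.2 x y).mpr hlt.le
      rcases htot with h | h
      · exact absurd ⟨h, hne⟩ hE
      · exact h

theorem s8_eset_cotrans (P : CanonPP n) {x y z : Fin n} (hxy : x < y) (hyz : y < z)
    (h1 : (x, y) ∉ Eset P) (h2 : (y, z) ∉ Eset P) : (x, z) ∉ Eset P := by
  intro hE
  have r1 : P.1.rle x y := (s8_rle_iff P x y).mpr (Or.inr ⟨hxy, h1⟩)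
  have r2 : P.1.rle y z := (s8_rle_iff P y z).mpr (Or.inr ⟨hyz, h2⟩)
  have r3 : P.1.rle x z := P.1.rle_trans _ _ _ r1 r2
  exact ((P.1.compat x z hE.2).mp (Or.inl hE.1)) (Or.inl r3)

theorem s8_canon_ext (P Q : CanonPP n) (h : Eset P = Eset Q) : P = Q := by
  apply Subtype.ext
  apply PlanePoset.ext'
  · funext x y
    simp only [eq_iff_iff]
    rw [s8_hle_iff, s8_hle_iff, h]
  · funext x y
    simp only [eq_iff_iff]
    rw [s8_rle_iff, s8_rle_iff, h]

/-- Build a canonical plane poset from a biclosed set of strict pairs. -/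
def s8_mkE (E : Fin n × Fin n → Prop)
    (hsub : ∀ x y : Fin n, E (x, y) → x < y)
    (htr : ∀ x y z : Fin n, E (x, y) → E (y, z) → E (x, z))
    (hco : ∀ x y z : Fin n, x < y → y < z → ¬E (x, y) → ¬E (y, z) → ¬E (x, z)) :
    CanonPP n :=
  ⟨{ hle := fun x y => x = y ∨ E (x, y)
     rle := fun x y => x = y ∨ (x < y ∧ ¬E (x, y))
     hle_refl := fun _ => Or.inl rfl
     hle_antisymm := by
       rintro x y (rfl | h1) h2
       · rfl
       · rcases h2 with rfl | h2
         · rfl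
         · exact absurd (hsub _ _ h2) (not_lt.mpr (hsub _ _ h1).le)
     hle_trans := by
       rintro x y z (rfl | h1) h2
       · exact h2
       · rcases h2 with rfl | h2
         · exact Or.inr h1
         · exact Or.inr (htr _ _ _ h1 h2)
     rle_refl := fun _ => Or.inl rfl
     rle_antisymm := by
       rintro x y (rfl | h1) h2
       · rfl
       · rcases h2 with rfl | h2
         · rfl
         · exact absurd h2.1 (not_lt.mpr h1.1.le)
     rle_trans := by
       rintro x y z (rfl | h1) h2
       · exact h2
       · rcases h2 with rfl | h2
         · exact Or.inr h1
         · exact Or.inr ⟨lt_trans h1.1 h2.1, hco _ _ _ h1.1 h2.1 h1.2 h2.2⟩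
     compat := by
       intro x y hxy
       rcases lt_trichotomy x y with hlt | heq | hlt
       · have h1 : ¬ E (y, x) := fun h => absurd (hsub _ _ h) (not_lt.mpr hlt.le)
         have h2 : ¬ y < x := not_lt.mpr hlt.le
         by_cases hE : E (x, y) <;>
           simp only [hxy, Ne.symm hxy, hE, h1, h2, hlt, false_or, or_false, true_and,
             false_and, and_false, not_or, not_false_iff, not_true, and_true] <;> tauto
       · exact absurd heq hxy
       · have h1 : ¬ E (x, y) := fun h => absurd (hsub _ _ h) (not_lt.mpr hlt.le)
         have h2 : ¬ x < y := not_lt.mpr hlt.le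
         by_cases hE : E (y, x) <;>
           simp only [hxy, Ne.symm hxy, hE, h1, h2, hlt, false_or, or_false, true_and,
             false_and, and_false, not_or, not_false_iff, not_true, and_true] <;> tauto },
   fun x y => by
     constructor
     · rintro ((rfl | h) | (rfl | h))
       · exact le_refl _
       · exact (hsub _ _ h).le
       · exact le_refl _
       · exact h.1.le
     · intro h
       rcases eq_or_lt_of_le h with rfl | hlt
       · exact Or.inl (Or.inl rfl)
       · by_cases hE : E (x, y)
         · exact Or.inl (Or.inr hE)
         · exact Or.inr (Or.inr ⟨hlt, hE⟩)⟩

theorem s8_Eset_mkE (E : Fin n × Fin n → Prop)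
    (hsub : ∀ x y : Fin n, E (x, y) → x < y)
    (htr : ∀ x y z : Fin n, E (x, y) → E (y, z) → E (x, z))
    (hco : ∀ x y z : Fin n, x < y → y < z → ¬E (x, y) → ¬E (y, z) → ¬E (x, z)) :
    Eset (s8_mkE E hsub htr hco) = {p | E p} := by
  ext ⟨x, y⟩
  show ((x = y ∨ E (x, y)) ∧ x ≠ y) ↔ E (x, y)
  constructor
  · rintro ⟨rfl | h, hne⟩
    · exact absurd rfl hne
    · exact h
  · intro h
    exact ⟨Or.inr h, ne_of_lt (hsub _ _ h)⟩

end Statement8Aux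

section Statement8Aux2

variable {n : ℕ}

theorem s8_exists_removable (P Q : CanonPP n) (hQP : Eset Q ⊆ Eset P)
    (hne : Eset P ≠ Eset Q) :
    ∃ a b : Fin n, (a, b) ∈ Eset P ∧ (a, b) ∉ Eset Q ∧
      (∀ y, ¬((a, y) ∈ Eset P ∧ (y, b) ∈ Eset P)) ∧
      (∀ c, b < c → (a, c) ∈ Eset P → (b, c) ∈ Eset P) ∧
      (∀ c, c < a → (c, b) ∈ Eset P → (c, a) ∈ Eset P) := by
  classical
  set D : Finset (Fin n × Fin n) :=
    Finset.univ.filter (fun p => p ∈ Eset P ∧ p ∉ Eset Q) with hD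
  have hDne : D.Nonempty := by
    by_contra hcon
    apply hne
    apply Set.Subset.antisymm _ hQP
    intro p hp
    by_contra hpQ
    exact hcon ⟨p, by simp [hD, hp, hpQ]⟩
  set L : Fin n → Fin n → Prop :=
    fun x y => (x < y ∧ (x, y) ∈ Eset P) ∨ (y < x ∧ (y, x) ∉ Eset P) with hL
  have Lirr : ∀ x, ¬ L x x := by
    rintro x (⟨h, -⟩ | ⟨h, -⟩) <;> exact lt_irrefl x h
  have Ltrans : ∀ x y z : Fin n, L x y → L y z → L x z := by
    rintro x y z (⟨hxy, he⟩ | ⟨hyx, he⟩) (⟨hyz, he'⟩ | ⟨hzy, he'⟩)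
    · exact Or.inl ⟨lt_trans hxy hyz, s8_eset_trans P he he'⟩
    · rcases lt_trichotomy x z with h | rfl | h
      · refine Or.inl ⟨h, ?_⟩
        by_contra hE
        exact s8_eset_cotrans P h hzy hE he' he
      · exact absurd he he'
      · refine Or.inr ⟨h, fun hE => he' (s8_eset_trans P hE he)⟩
    · rcases lt_trichotomy x z with h | rfl | h
      · refine Or.inl ⟨h, ?_⟩
        by_contra hE
        exact s8_eset_cotrans P hyx h he hE he'
      · exact absurd he' he
      · exact Or.inr ⟨h, fun hE => he (s8_eset_trans P he' hE)⟩
    · exact Or.inr ⟨lt_trans hzy hyx, s8_eset_cotrans P hzy hyx he' he⟩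
  set S : Fin n × Fin n → Finset (Fin n) :=
    fun p => Finset.univ.filter (fun y => L p.1 y ∧ L y p.2) with hS
  obtain ⟨p, hpD, hmin⟩ := D.exists_min_image (fun p => (S p).card) hDne
  obtain ⟨a, b⟩ := p
  have hpD' : (a, b) ∈ Eset P ∧ (a, b) ∉ Eset Q := by
    simpa [hD] using hpD
  obtain ⟨haP, haQ⟩ := hpD'
  have hab : a < b := s8_eset_lt P haP
  refine ⟨a, b, haP, haQ, ?_, ?_, ?_⟩
  · -- no y with (a,y) and (y,b) both in Eset P
    rintro y ⟨hay, hyb⟩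
    have hyQ : (a, y) ∉ Eset Q ∨ (y, b) ∉ Eset Q := by
      by_contra hcon
      push_neg at hcon
      exact haQ (s8_eset_trans Q hcon.1 hcon.2)
    have hLay : L a y := Or.inl ⟨s8_eset_lt P hay, hay⟩
    have hLyb : L y b := Or.inl ⟨s8_eset_lt P hyb, hyb⟩
    rcases hyQ with hyQ | hyQ
    · have hmem : (a, y) ∈ D := by simp [hD, hay, hyQ]
      have hsubS : S (a, y) ⊆ S (a, b) := by
        intro x hx
        simp only [hS, Finset.mem_filter, Finset.mem_univ, true_and] at hx ⊢
        exact ⟨hx.1, Ltrans _ _ _ hx.2 hLyb⟩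
      have hss : S (a, y) ⊂ S (a, b) := by
        refine (Finset.ssubset_iff_of_subset hsubS).mpr ⟨y, ?_, ?_⟩
        · simp only [hS, Finset.mem_filter, Finset.mem_univ, true_and]
          exact ⟨hLay, hLyb⟩
        · simp only [hS, Finset.mem_filter, Finset.mem_univ, true_and, not_and]
          intro _; exact Lirr y
      exact absurd (hmin _ hmem) (not_le.mpr (Finset.card_lt_card hss))
    · have hmem : (y, b) ∈ D := by simp [hD, hyb, hyQ]
      have hsubS : S (y, b) ⊆ S (a, b) := by
        intro x hx
        simp only [hS, Finset.mem_filter, Finset.mem_univ, true_and] at hx ⊢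
        exact ⟨Ltrans _ _ _ hLay hx.1, hx.2⟩
      have hss : S (y, b) ⊂ S (a, b) := by
        refine (Finset.ssubset_iff_of_subset hsubS).mpr ⟨y, ?_, ?_⟩
        · simp only [hS, Finset.mem_filter, Finset.mem_univ, true_and]
          exact ⟨hLay, hLyb⟩
        · simp only [hS, Finset.mem_filter, Finset.mem_univ, true_and, not_and]
          intro h; exact absurd h (Lirr y)
      exact absurd (hmin _ hmem) (not_le.mpr (Finset.card_lt_card hss))
  · -- C1
    intro c hbc hac
    by_contra hbcE
    have hbcQ : (b, c) ∉ Eset Q := fun h => hbcE (hQP h)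
    have hacQ : (a, c) ∉ Eset Q := s8_eset_cotrans Q hab hbc haQ hbcQ
    have hmem : (a, c) ∈ D := by simp [hD, hac, hacQ]
    have hLac : L a c := Or.inl ⟨lt_trans hab hbc, hac⟩
    have hLcb : L c b := Or.inr ⟨hbc, hbcE⟩
    have hsubS : S (a, c) ⊆ S (a, b) := by
      intro x hx
      simp only [hS, Finset.mem_filter, Finset.mem_univ, true_and] at hx ⊢
      exact ⟨hx.1, Ltrans _ _ _ hx.2 hLcb⟩
    have hss : S (a, c) ⊂ S (a, b) := by
      refine (Finset.ssubset_iff_of_subset hsubS).mpr ⟨c, ?_, ?_⟩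
      · simp only [hS, Finset.mem_filter, Finset.mem_univ, true_and]
        exact ⟨hLac, hLcb⟩
      · simp only [hS, Finset.mem_filter, Finset.mem_univ, true_and, not_and]
        intro _; exact Lirr c
    exact absurd (hmin _ hmem) (not_le.mpr (Finset.card_lt_card hss))
  · -- C2
    intro c hca hcb
    by_contra hcaE
    have hcaQ : (c, a) ∉ Eset Q := fun h => hcaE (hQP h)
    have hcbQ : (c, b) ∉ Eset Q := s8_eset_cotrans Q hca hab hcaQ haQ
    have hmem : (c, b) ∈ D := by simp [hD, hcb, hcbQ]
    have hLac : L a c := Or.inr ⟨hca, hcaE⟩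
    have hLcb : L c b := Or.inl ⟨lt_trans hca hab, hcb⟩
    have hsubS : S (c, b) ⊆ S (a, b) := by
      intro x hx
      simp only [hS, Finset.mem_filter, Finset.mem_univ, true_and] at hx ⊢
      exact ⟨Ltrans _ _ _ hLac hx.1, hx.2⟩
    have hss : S (c, b) ⊂ S (a, b) := by
      refine (Finset.ssubset_iff_of_subset hsubS).mpr ⟨c, ?_, ?_⟩
      · simp only [hS, Finset.mem_filter, Finset.mem_univ, true_and]
        exact ⟨hLac, hLcb⟩
      · simp only [hS, Finset.mem_filter, Finset.mem_univ, true_and, not_and]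
        intro h; exact absurd h (Lirr c)
    exact absurd (hmin _ hmem) (not_le.mpr (Finset.card_lt_card hss))

end Statement8Aux2

section Statement8Aux3

variable {n : ℕ}

theorem s8_chain_aux (m : ℕ) : ∀ (P Q : CanonPP n), PPle P Q →
    (Finset.univ.filter (fun p : Fin n × Fin n => p ∈ Eset P ∧ p ∉ Eset Q)).card ≤ m →
    ∃ (k : ℕ) (c : Fin (k + 1) → CanonPP n), c 0 = P ∧ c (Fin.last k) = Q ∧
      ∀ i : Fin k, ∃ p ∈ Eset (c i.castSucc),
        Eset (c i.succ) = Eset (c i.castSucc) \ {p} := by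
  classical
  induction m with
  | zero =>
    intro P Q h hcard
    have hQP : Eset Q ⊆ Eset P := fun p hp => ⟨h p.1 p.2 hp.1, hp.2⟩
    have hempty : Finset.univ.filter
        (fun p : Fin n × Fin n => p ∈ Eset P ∧ p ∉ Eset Q) = ∅ :=
      Finset.card_eq_zero.mp (Nat.le_zero.mp hcard)
    have hPQ : Eset P = Eset Q := by
      apply Set.Subset.antisymm _ hQP
      intro p hp
      by_contra hpQ
      have : p ∈ (∅ : Finset (Fin n × Fin n)) := by
        rw [← hempty]; simp [hp, hpQ]
      simp at this
    have : P = Q := s8_canon_ext P Q hPQ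
    subst this
    exact ⟨0, fun _ => P, rfl, rfl, fun i => i.elim0⟩
  | succ m ih =>
    intro P Q h hcard
    have hQP : Eset Q ⊆ Eset P := fun p hp => ⟨h p.1 p.2 hp.1, hp.2⟩
    by_cases hPQ : Eset P = Eset Q
    · have : P = Q := s8_canon_ext P Q hPQ
      subst this
      exact ⟨0, fun _ => P, rfl, rfl, fun i => i.elim0⟩
    · obtain ⟨a, b, haP, haQ, hT, hC1, hC2⟩ := s8_exists_removable P Q hQP hPQ
      have hab : a < b := s8_eset_lt P haP
      set E' : Fin n × Fin n → Prop := fun p => p ∈ Eset P ∧ p ≠ (a, b) with hE'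
      have hsub : ∀ x y : Fin n, E' (x, y) → x < y := fun x y hx => s8_eset_lt P hx.1
      have htr : ∀ x y z : Fin n, E' (x, y) → E' (y, z) → E' (x, z) := by
        rintro x y z ⟨h1, -⟩ ⟨h2, -⟩
        refine ⟨s8_eset_trans P h1 h2, fun hp => ?_⟩
        obtain ⟨rfl, rfl⟩ := Prod.mk.inj hp
        exact hT y ⟨h1, h2⟩
      have hco : ∀ x y z : Fin n, x < y → y < z → ¬E' (x, y) → ¬E' (y, z) → ¬E' (x, z) := by
        intro x y z hxy hyz h1 h2 h3
        obtain ⟨hxzP, hxzne⟩ := h3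
        by_cases hxyP : (x, y) ∈ Eset P
        · have heq : (x, y) = (a, b) := by
            by_contra hne
            exact h1 ⟨hxyP, hne⟩
          have hx : x = a := (Prod.mk.inj heq).1
          have hy : y = b := (Prod.mk.inj heq).2
          rw [hx] at hxzP
          rw [hy] at hyz
          have hbz : (b, z) ∈ Eset P := hC1 z hyz hxzP
          refine h2 ⟨by rw [hy]; exact hbz, fun hp => ?_⟩
          have hya : y = a := (Prod.mk.inj hp).1
          rw [hy] at hya
          exact (ne_of_lt hab) hya.symm
        · by_cases hyzP : (y, z) ∈ Eset P
          · have heq : (y, z) = (a, b) := by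
              by_contra hne
              exact h2 ⟨hyzP, hne⟩
            have hy : y = a := (Prod.mk.inj heq).1
            have hz : z = b := (Prod.mk.inj heq).2
            rw [hz] at hxzP
            rw [hy] at hxy
            have hxa : (x, a) ∈ Eset P := hC2 x hxy hxzP
            refine h1 ⟨by rw [hy]; exact hxa, fun hp => ?_⟩
            have hyb : y = b := (Prod.mk.inj hp).2
            rw [hy] at hyb
            exact (ne_of_lt hab) hyb
          · exact s8_eset_cotrans P hxy hyz hxyP hyzP hxzP
      set P' : CanonPP n := s8_mkE E' hsub htr hco with hP'
      have hEP' : Eset P' = Eset P \ {(a, b)} := by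
        rw [hP', s8_Eset_mkE]
        ext p
        simp [hE', Set.mem_diff]
      have hle' : PPle P' Q := by
        intro x y hxy
        rw [s8_hle_iff] at hxy ⊢
        rcases hxy with rfl | hxy
        · exact Or.inl rfl
        · refine Or.inr ?_
          rw [hEP']
          exact ⟨hQP hxy, fun hp => haQ (by rwa [Set.mem_singleton_iff.mp hp] at hxy)⟩
      have hcard' : (Finset.univ.filter
          (fun p : Fin n × Fin n => p ∈ Eset P' ∧ p ∉ Eset Q)).card ≤ m := by
        have hsubF : (Finset.univ.filter
            (fun p : Fin n × Fin n => p ∈ Eset P' ∧ p ∉ Eset Q)) ⊆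
            (Finset.univ.filter
            (fun p : Fin n × Fin n => p ∈ Eset P ∧ p ∉ Eset Q)) := by
          intro p hp
          simp only [Finset.mem_filter, Finset.mem_univ, true_and] at hp ⊢
          rw [hEP'] at hp
          exact ⟨hp.1.1, hp.2⟩
        have hssF : (Finset.univ.filter
            (fun p : Fin n × Fin n => p ∈ Eset P' ∧ p ∉ Eset Q)) ⊂
            (Finset.univ.filter
            (fun p : Fin n × Fin n => p ∈ Eset P ∧ p ∉ Eset Q)) := by
          refine (Finset.ssubset_iff_of_subset hsubF).mpr ⟨(a, b), ?_, ?_⟩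
          · simp [haP, haQ]
          · simp only [Finset.mem_filter, Finset.mem_univ, true_and, not_and]
            intro hmem
            rw [hEP'] at hmem
            exact absurd rfl hmem.2
        have := Finset.card_lt_card hssF
        omega
      obtain ⟨k, c, hc0, hclast, hstep⟩ := ih P' Q hle' hcard'
      refine ⟨k + 1, Fin.cons P c, Fin.cons_zero _ _, ?_, ?_⟩
      · rw [← Fin.succ_last, Fin.cons_succ]
        exact hclast
      · intro i
        refine Fin.cases ?_ ?_ i
        · rw [Fin.castSucc_zero, Fin.cons_zero, Fin.cons_succ, hc0]
          refine ⟨(a, b), haP, ?_⟩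
          rw [hEP']
        · intro j
          rw [← Fin.succ_castSucc, Fin.cons_succ, Fin.cons_succ]
          exact hstep j

end Statement8Aux3


/-- Let `P ≤ Q` in `PP(n)`. Then there is a chain
`P = P_0 ⪯ P_1 ⪯ … ⪯ P_k = Q`, where `R ⪯ S` means that `E(S) = E(R) ∖ {(i,j)}` for some
`(i,j) ∈ E(R)`. -/
theorem statement8 {n : ℕ} (P Q : CanonPP n) (h : PPle P Q) :
    ∃ (k : ℕ) (c : Fin (k + 1) → CanonPP n), c 0 = P ∧ c (Fin.last k) = Q ∧
      ∀ i : Fin k, ∃ p ∈ Eset (c i.castSucc),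
        Eset (c i.succ) = Eset (c i.castSucc) \ {p} := by
  exact s8_chain_aux _ P Q h le_rfl
end

section
/- For all n ≥ 0 and all σ, τ ∈ S_n: σ ≤ τ in the weak Bruhat order if, and only if, Ψ_n(σ) ≤ Ψ_n(τ) in PP(n). Hence Ψ_n is an isomorphism of posets from (S_n, weak Bruhat order) to (PP(n), ≤). -/
open scoped TensorProduct
open scoped Classical

/-! `Ψ_n(σ) ≤ Ψ_n(τ)` says exactly that every inversion of `σ` (a pair of letters `a < b`
with `b` written before `a`) is an inversion of `τ`, and a weak Bruhat step adds exactly one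
inversion. Conversely, if `σ ≠ τ` and the inversions of `σ` are inversions of `τ`, some
adjacent ascent of `σ` is inverted in `τ`: otherwise `τ⁻¹ ∘ σ` would increase along
consecutive positions, hence be the identity. Exchanging that ascent is a step towards `τ`,
and induction on the number of missing inversions concludes. -/

open Equiv Equiv.Perm Finset Relation

lemma CovBy.swap_lt_swap_iff {α : Type*} [LinearOrder α] {k k' p q : α} (hk : k ⋖ k') :
    swap k k' p < swap k k' q ↔ (p < q ∧ ¬(p = k ∧ q = k')) ∨ (p = k' ∧ q = k) := by
  have hkk' := hk.lt
  have hbetween : ∀ c, ¬(k < c ∧ c < k') := fun c hc => hk.2 hc.1 hc.2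
  simp only [swap_apply_def]
  split_ifs <;> grind

namespace Equiv.Perm

variable {α : Type*} [LinearOrder α] [Fintype α]

def inversionSet (σ : Perm α) : Finset (α × α) :=
  univ.filter fun p => p.1 < p.2 ∧ σ.symm p.2 < σ.symm p.1

@[simp] lemma mem_inversionSet {σ : Perm α} {a b : α} :
    (a, b) ∈ σ.inversionSet ↔ a < b ∧ σ.symm b < σ.symm a := by
  simp [inversionSet]

lemma inversionSet_mul_swap_of_covBy {σ : Perm α} {k k' : α} (hk : k ⋖ k')
    (hσ : σ k < σ k') :
    (σ * swap k k').inversionSet = insert (σ k, σ k') σ.inversionSet := by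
  ext ⟨a, b⟩
  obtain ⟨p, rfl⟩ := σ.surjective a
  obtain ⟨q, rfl⟩ := σ.surjective b
  have hsymm : ∀ x, (σ * swap k k').symm (σ x) = swap k k' x := fun x => by
    simp [symm_apply_eq]
  simp only [mem_inversionSet, hsymm, hk.swap_lt_swap_iff, mem_insert, Prod.mk.injEq,
    σ.injective.eq_iff, symm_apply_apply]
  grind

lemma eq_of_strictMono_symm_comp {σ τ : Perm α} (h : StrictMono (τ.symm ∘ σ)) : σ = τ := by
  let e : α ≃o α := h.orderIsoOfSurjective _ (τ.symm.surjective.comp σ.surjective)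
  have he : e = OrderIso.refl α := Subsingleton.elim _ _
  ext x
  simpa [e, symm_apply_eq] using DFunLike.congr_fun he x

lemma exists_covBy_mem_inversionSet [LocallyFiniteOrder α] {σ τ : Perm α} (hne : σ ≠ τ)
    (h : σ.inversionSet ⊆ τ.inversionSet) :
    ∃ k k', k ⋖ k' ∧ σ k < σ k' ∧ (σ k, σ k') ∈ τ.inversionSet := by
  by_contra! hcon
  refine hne (eq_of_strictMono_symm_comp ((strictMono_iff_forall_covBy _).2 fun k k' hk => ?_))
  have hne' : τ.symm (σ k) ≠ τ.symm (σ k') := by simpa using hk.ne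
  rcases lt_or_gt_of_ne (σ.injective.ne hk.ne) with hlt | hgt
  · have := hcon k k' hk hlt
    simp only [mem_inversionSet, hlt, true_and, not_lt] at this
    exact lt_of_le_of_ne this hne'
  · have : (σ k', σ k) ∈ σ.inversionSet := by simp [hgt, hk.lt]
    simpa using (mem_inversionSet.1 (h this)).2

end Equiv.Perm

variable {n : ℕ}

lemma pple_psiPerm_iff_inversionSet_subset {σ τ : Perm (Fin n)} :
    PPle (PsiPerm σ) (PsiPerm τ) ↔ σ.inversionSet ⊆ τ.inversionSet := by
  refine ⟨fun h ⟨a, b⟩ hab => ?_, fun h a b ⟨hab, hτ⟩ => ⟨hab, ?_⟩⟩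
  · rw [mem_inversionSet] at hab ⊢
    exact ⟨hab.1, lt_of_not_ge fun hτ => (h a b ⟨hab.1.le, hτ⟩).2.not_gt hab.2⟩
  · rcases hab.eq_or_lt with rfl | hab
    · exact le_rfl
    · exact le_of_not_gt fun hσ =>
        (mem_inversionSet.1 (h (mem_inversionSet.2 ⟨hab, hσ⟩))).2.not_ge hτ

lemma bruhatStep_mul_swap_of_covBy {σ : Perm (Fin n)} {k k' : Fin n} (hk : k ⋖ k')
    (hσ : σ k < σ k') : bruhatStep σ (σ * swap k k') := by
  have hk' : (k : ℕ) + 1 = k' := Nat.covBy_iff_add_one_eq.1 (Fin.covBy_iff.1 hk)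
  refine ⟨σ k, σ k', k, hk' ▸ k'.isLt, hσ, rfl, by simp [hk'], ?_⟩
  simp [swap_mul_eq_mul_swap]

lemma bruhatStep.exists_covBy {σ τ : Perm (Fin n)} (h : bruhatStep σ τ) :
    ∃ k k', k ⋖ k' ∧ σ k < σ k' ∧ τ = σ * swap k k' := by
  obtain ⟨-, -, k, hk, hσ, rfl, rfl, rfl⟩ := h
  refine ⟨k, _, Fin.covBy_iff.2 (Nat.covBy_iff_add_one_eq.2 rfl), hσ, ?_⟩
  simp [swap_mul_eq_mul_swap]

lemma inversionSet_subset_of_reflTransGen {σ τ : Perm (Fin n)}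
    (h : ReflTransGen bruhatStep σ τ) : σ.inversionSet ⊆ τ.inversionSet := by
  induction h with
  | refl => rfl
  | tail _ hstep ih =>
    obtain ⟨k, k', hk, hσ, rfl⟩ := hstep.exists_covBy
    rw [inversionSet_mul_swap_of_covBy hk hσ]
    exact ih.trans (subset_insert _ _)

lemma reflTransGen_of_inversionSet_subset {σ τ : Perm (Fin n)}
    (h : σ.inversionSet ⊆ τ.inversionSet) : ReflTransGen bruhatStep σ τ := by
  by_cases hστ : σ = τ
  · exact hστ ▸ .refl
  obtain ⟨k, k', hk, hσ, hτ⟩ := exists_covBy_mem_inversionSet hστ h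
  have hnew : (σ k, σ k') ∉ σ.inversionSet := by simp [hk.lt.le]
  have hgrow : σ.inversionSet ⊂ (σ * swap k k').inversionSet := by
    rw [inversionSet_mul_swap_of_covBy hk hσ]
    exact ssubset_insert hnew
  have hsub : (σ * swap k k').inversionSet ⊆ τ.inversionSet := by
    rw [inversionSet_mul_swap_of_covBy hk hσ]
    exact insert_subset hτ h
  exact .head (bruhatStep_mul_swap_of_covBy hk hσ) (reflTransGen_of_inversionSet_subset hsub)
termination_by τ.inversionSet.card - σ.inversionSet.card
decreasing_by
  have := card_lt_card hgrow
  have := card_le_card hsub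
  omega

/-- For all `n ≥ 0` and all `σ, τ ∈ S_n`: `σ ≤ τ` for the weak Bruhat
order (the order generated by exchanges of consecutive letters `i < j`, `i` immediately
before `j`) if and only if `Ψ_n(σ) ≤ Ψ_n(τ)` in `PP(n)`; hence `Ψ_n` is an isomorphism of
posets. -/
theorem statement10 (n : ℕ) (σ τ : Equiv.Perm (Fin n)) :
    Relation.ReflTransGen bruhatStep σ τ ↔ PPle (PsiPerm σ) (PsiPerm τ) := by
  rw [pple_psiPerm_iff_inversionSet_subset]
  exact ⟨inversionSet_subset_of_reflTransGen, reflTransGen_of_inversionSet_subset⟩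
end

section
/- Let P_1, Q_1 be plane posets of cardinality k and P_2, Q_2 be plane posets of cardinality l. The following conditions are equivalent: (1) P_1P_2 ≤ Q_1Q_2; (2) P_1 ▷ P_2 ≤ Q_1 ▷ Q_2; (3) P_1 ≤ Q_1 and P_2 ≤ Q_2. -/
open scoped TensorProduct
open scoped Classical

/-- Let `P₁, Q₁ ∈ PP(k)` and `P₂, Q₂ ∈ PP(l)`. The following are
equivalent: (1) `P₁P₂ ≤ Q₁Q₂`; (2) `P₁ ▷ P₂ ≤ Q₁ ▷ Q₂`; (3) `P₁ ≤ Q₁` and `P₂ ≤ Q₂`. -/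
theorem statement11 {k l : ℕ} (P1 Q1 : CanonPP k) (P2 Q2 : CanonPP l) :
    (PPle (P1.comp P2) (Q1.comp Q2) ↔ PPle P1 Q1 ∧ PPle P2 Q2) ∧
    (PPle (P1.hcomp P2) (Q1.hcomp Q2) ↔ PPle P1 Q1 ∧ PPle P2 Q2) := by
  constructor
  · constructor
    · intro h
      constructor
      · intro a b hq
        have := h (finSumFinEquiv (Sum.inl a)) (finSumFinEquiv (Sum.inl b))
        simp only [CanonPP.comp, PlanePoset.map_hle, Equiv.symm_apply_apply] at this
        exact this hq
      · intro a b hq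
        have := h (finSumFinEquiv (Sum.inr a)) (finSumFinEquiv (Sum.inr b))
        simp only [CanonPP.comp, PlanePoset.map_hle, Equiv.symm_apply_apply] at this
        exact this hq
    · rintro ⟨h1, h2⟩ x y hq
      obtain ⟨a, rfl⟩ := finSumFinEquiv.surjective x
      obtain ⟨b, rfl⟩ := finSumFinEquiv.surjective y
      simp only [CanonPP.comp, PlanePoset.map_hle, Equiv.symm_apply_apply] at hq ⊢
      rcases a with a | a <;> rcases b with b | b
      · exact h1 a b hq
      · exact hq.elim
      · exact hq.elim
      · exact h2 a b hq
  · constructor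
    · intro h
      constructor
      · intro a b hq
        have := h (finSumFinEquiv (Sum.inl a)) (finSumFinEquiv (Sum.inl b))
        simp only [CanonPP.hcomp, PlanePoset.map_hle, Equiv.symm_apply_apply] at this
        exact this hq
      · intro a b hq
        have := h (finSumFinEquiv (Sum.inr a)) (finSumFinEquiv (Sum.inr b))
        simp only [CanonPP.hcomp, PlanePoset.map_hle, Equiv.symm_apply_apply] at this
        exact this hq
    · rintro ⟨h1, h2⟩ x y hq
      obtain ⟨a, rfl⟩ := finSumFinEquiv.surjective x
      obtain ⟨b, rfl⟩ := finSumFinEquiv.surjective y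
      simp only [CanonPP.hcomp, PlanePoset.map_hle, Equiv.symm_apply_apply] at hq ⊢
      rcases a with a | a <;> rcases b with b | b
      · exact h1 a b hq
      · trivial
      · exact hq.elim
      · exact h2 a b hq
end

section
/- For any plane posets P, Q of the same cardinality n: P ≤ Q if, and only if, ι(Q) ≤ ι(P), where ι exchanges the two partial orders. In other words, ι is a decreasing involution of (PP(n), ≤). -/
open scoped TensorProduct
open scoped Classical

/-- For any plane posets `P, Q ∈ PP(n)`: `P ≤ Q` if and only if
`ι(Q) ≤ ι(P)`; that is, `ι` is a decreasing involution of `(PP(n), ≤)`. -/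
theorem statement12 {n : ℕ} (P Q : CanonPP n) :
    PPle P Q ↔ PPle (CanonPP.iota Q) (CanonPP.iota P) := by
  constructor
  · intro h x y hxy
    -- hxy : P.1.rle x y, goal : Q.1.rle x y
    by_cases hne : x = y
    · subst hne; exact Q.1.rle_refl x
    · have hle : x ≤ y := (P.2 x y).mp (Or.inr hxy)
      rcases (Q.2 x y).mpr hle with hQ | hQ
      · exfalso
        have := (P.2 x y).mpr hle
        have hP := h x y hQ
        exact (P.1.compat x y hne).mp (Or.inl hP) (Or.inl hxy)
      · exact hQ
  · intro h x y hxy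
    -- hxy : Q.1.hle x y, goal : P.1.hle x y
    by_cases hne : x = y
    · subst hne; exact P.1.hle_refl x
    · have hle : x ≤ y := (Q.2 x y).mp (Or.inl hxy)
      rcases (P.2 x y).mpr hle with hP | hP
      · exact hP
      · exfalso
        have hQ := h x y hP
        exact (Q.1.compat x y hne).mp (Or.inl hxy) (Or.inl hQ)
end

section
/- Let P, Q, R be plane posets with |P| + |Q| = |R|. Then PQ ≤ R if, and only if, there exists a plane subposet I₀ of R such that R = (R∖I₀) I₀, P ≤ R∖I₀, and Q ≤ I₀. Moreover, when this holds, such an I₀ is unique and equals θ_{PQ,R}(Q). -/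
open scoped TensorProduct
open scoped Classical

/-!
In a canonical plane poset the total order `≤_h ∪ ≤_r` is the order of `Fin n`. A subset `I`
with `R = (R ∖ I) I` is therefore an upper set of `Fin (k + l)`, and if it has `l` elements it
is the top block `{k, …, k + l - 1}`, on which the increasing bijections from `Fin k` and
`Fin l` are `castAdd` and `natAdd`. Splitting `PQ ≤ R` along these two blocks, the diagonal
blocks say `P ≤ R ∖ I` and `Q ≤ I`, while the off-diagonal block says that no pair
`x < k ≤ y` is `≤_h`-comparable in `R`, i.e. that every such pair is `≤_r`-comparable.
-/

namespace Fin

variable {k l : ℕ}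

theorem castAdd_lt_natAdd (a : Fin k) (b : Fin l) :
    castAdd l a < natAdd k b := by
  simp only [lt_def, val_castAdd, val_natAdd]
  omega

theorem card_filter_le_val :
    (Finset.univ.filter fun i : Fin (k + l) => k ≤ (i : ℕ)).card = l := by
  have hcompl : (Finset.univ.filter fun i : Fin (k + l) => k ≤ (i : ℕ)) =
      (Finset.univ.filter fun i : Fin (k + l) => (i : ℕ) < k)ᶜ := by
    ext
    simp
  rw [hcompl, Finset.card_compl, card_filter_val_lt, Fintype.card_fin]
  omega

theorem card_compl_filter_le_val :
    (Finset.univ.filter fun i : Fin (k + l) => k ≤ (i : ℕ))ᶜ.card = k := by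
  rw [Finset.card_compl, card_filter_le_val, Fintype.card_fin]
  omega

theorem eq_filter_le_val_of_isUpperSet {I : Finset (Fin (k + l))}
    (hI : IsUpperSet (I : Set (Fin (k + l)))) (hcard : I.card = l) :
    I = Finset.univ.filter fun i : Fin (k + l) => k ≤ (i : ℕ) := by
  have hupper : IsUpperSet (↑(Finset.univ.filter fun i : Fin (k + l) => k ≤ (i : ℕ)) :
      Set (Fin (k + l))) := by
    intro x y hxy hx
    simp only [Finset.coe_filter, Finset.mem_univ, true_and, Set.mem_ofPred_eq] at hx ⊢
    exact hx.trans hxy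
  rcases hI.total hupper with h | h
  · exact Finset.eq_of_subset_of_card_le (Finset.coe_subset.1 h)
      (by rw [hcard, card_filter_le_val])
  · exact (Finset.eq_of_subset_of_card_le (Finset.coe_subset.1 h)
      (by rw [hcard, card_filter_le_val])).symm

end Fin

namespace CanonPP

variable {n : ℕ}

theorem hle_le (R : CanonPP n) {x y : Fin n} (h : R.1.hle x y) : x ≤ y :=
  (R.2 x y).1 (Or.inl h)

theorem rle_le (R : CanonPP n) {x y : Fin n} (h : R.1.rle x y) : x ≤ y :=
  (R.2 x y).1 (Or.inr h)

theorem rle_iff_not_hle_of_lt (R : CanonPP n) {x y : Fin n} (hxy : x < y) :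
    R.1.rle x y ↔ ¬ R.1.hle x y := by
  have hcompat := R.1.compat x y hxy.ne
  rcases (R.2 x y).2 hxy.le with h | h <;> tauto

theorem isUpperSet_of_rle_split (R : CanonPP n) {I : Finset (Fin n)}
    (hsplit : ∀ x ∉ I, ∀ y ∈ I, x ≠ y → R.1.rle x y) : IsUpperSet (I : Set (Fin n)) := by
  intro x y hxy hx
  by_contra hy
  have hyx : y ≠ x := fun h => hy (h ▸ hx)
  exact hyx (le_antisymm (R.rle_le (hsplit y hy x hx hyx)) hxy)

theorem cast_restrict_hle {m : ℕ} (R : CanonPP n) (s : Finset (Fin n)) (h : s.card = m)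
    (a b : Fin m) :
    (cast (congrArg CanonPP h) (R.restrict s)).1.hle a b ↔
      R.1.hle (s.orderEmbOfFin h a) (s.orderEmbOfFin h b) := by
  subst h
  simp only [cast_eq, ← Finset.coe_orderIsoOfFin_apply]
  rfl

theorem ppLe_cast_restrict_iff {m : ℕ} (P : CanonPP m) (R : CanonPP n) {s : Finset (Fin n)}
    (h : s.card = m) (f : Fin m ↪o Fin n) (hf : ∀ a, f a ∈ s) :
    PPle P (cast (congrArg CanonPP h) (R.restrict s)) ↔
      ∀ a b, R.1.hle (f a) (f b) → P.1.hle a b := by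
  refine forall₂_congr fun a b => ?_
  have hunique := Finset.orderEmbOfFin_unique' h hf
  rw [cast_restrict_hle R s h, ← hunique]

variable {k l : ℕ} (P : CanonPP k) (Q : CanonPP l)

theorem comp_hle_castAdd_castAdd (a b : Fin k) :
    (P.comp Q).1.hle (Fin.castAdd l a) (Fin.castAdd l b) ↔ P.1.hle a b := by
  simp only [comp, PlanePoset.map_hle, finSumFinEquiv_symm_apply_castAdd]
  rfl

theorem comp_hle_natAdd_natAdd (a b : Fin l) :
    (P.comp Q).1.hle (Fin.natAdd k a) (Fin.natAdd k b) ↔ Q.1.hle a b := by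
  simp only [comp, PlanePoset.map_hle, finSumFinEquiv_symm_apply_natAdd]
  rfl

theorem not_comp_hle_castAdd_natAdd (a : Fin k) (b : Fin l) :
    ¬ (P.comp Q).1.hle (Fin.castAdd l a) (Fin.natAdd k b) := by
  simp only [comp, PlanePoset.map_hle, finSumFinEquiv_symm_apply_castAdd,
    finSumFinEquiv_symm_apply_natAdd]
  exact id

theorem ppLe_comp_iff (R : CanonPP (k + l)) :
    PPle (P.comp Q) R ↔
      (∀ a b, ¬ R.1.hle (Fin.castAdd l a) (Fin.natAdd k b)) ∧
      (∀ a b, R.1.hle (Fin.castAdd l a) (Fin.castAdd l b) → P.1.hle a b) ∧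
      (∀ a b, R.1.hle (Fin.natAdd k a) (Fin.natAdd k b) → Q.1.hle a b) := by
  constructor
  · intro h
    exact ⟨fun a b hab => not_comp_hle_castAdd_natAdd P Q a b (h _ _ hab),
      fun a b hab => (comp_hle_castAdd_castAdd P Q a b).1 (h _ _ hab),
      fun a b hab => (comp_hle_natAdd_natAdd P Q a b).1 (h _ _ hab)⟩
  · rintro ⟨hcross, hP, hQ⟩ x y hxy
    induction x using Fin.addCases with
    | left a =>
      induction y using Fin.addCases with
      | left b => exact (comp_hle_castAdd_castAdd P Q a b).2 (hP a b hxy)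
      | right b => exact (hcross a b hxy).elim
    | right a =>
      induction y using Fin.addCases with
      | left b => exact absurd (R.hle_le hxy) (Fin.castAdd_lt_natAdd b a).not_ge
      | right b => exact (comp_hle_natAdd_natAdd P Q a b).2 (hQ a b hxy)

theorem rle_split_filter_le_val_iff (R : CanonPP (k + l)) :
    (∀ x ∉ Finset.univ.filter (fun i : Fin (k + l) => k ≤ (i : ℕ)),
        ∀ y ∈ Finset.univ.filter (fun i : Fin (k + l) => k ≤ (i : ℕ)), x ≠ y → R.1.rle x y) ↔
      ∀ a b, ¬ R.1.hle (Fin.castAdd l a) (Fin.natAdd k b) := by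
  simp only [Finset.mem_filter, Finset.mem_univ, true_and, not_le]
  constructor
  · intro h a b
    have hlt := Fin.castAdd_lt_natAdd a b
    exact (R.rle_iff_not_hle_of_lt hlt).1 (h _ (by simp) _ (by simp) hlt.ne)
  · intro h x hx y hy _
    obtain ⟨a, rfl⟩ : ∃ a : Fin k, Fin.castAdd l a = x := ⟨⟨x, hx⟩, rfl⟩
    obtain ⟨b, rfl⟩ : ∃ b : Fin l, Fin.natAdd k b = y :=
      ⟨⟨y - k, by omega⟩, Fin.ext (by simp only [Fin.val_natAdd]; omega)⟩
    exact (R.rle_iff_not_hle_of_lt (Fin.castAdd_lt_natAdd a b)).2 (h a b)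

end CanonPP

/-- Let `P, Q, R` be plane posets with `|P| + |Q| = |R|`. Then `PQ ≤ R`
iff there is a plane subposet `I₀` of `R` with `R = (R∖I₀)I₀`, `P ≤ R∖I₀` and `Q ≤ I₀`;
moreover such an `I₀` is unique, and equals `θ_{PQ,R}(Q)`, the set of the `|Q|` greatest
elements of `R`. -/
theorem statement14 {k l : ℕ} (P : CanonPP k) (Q : CanonPP l) (R : CanonPP (k + l)) :
    (PPle (P.comp Q) R ↔
      ∃ I : Finset (Fin (k + l)),
        (∀ x ∉ I, ∀ y ∈ I, x ≠ y → R.1.rle x y) ∧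
        ∃ (h1 : Iᶜ.card = k) (h2 : I.card = l),
          PPle P (cast (congrArg CanonPP h1) (R.restrict Iᶜ)) ∧
          PPle Q (cast (congrArg CanonPP h2) (R.restrict I))) ∧
    ∀ I : Finset (Fin (k + l)),
      ((∀ x ∉ I, ∀ y ∈ I, x ≠ y → R.1.rle x y) ∧
        ∃ (h1 : Iᶜ.card = k) (h2 : I.card = l),
          PPle P (cast (congrArg CanonPP h1) (R.restrict Iᶜ)) ∧
          PPle Q (cast (congrArg CanonPP h2) (R.restrict I))) →
      I = Finset.univ.filter (fun i : Fin (k + l) => k ≤ (i : ℕ)) := by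
  have hunique : ∀ I : Finset (Fin (k + l)), (∀ x ∉ I, ∀ y ∈ I, x ≠ y → R.1.rle x y) →
      I.card = l → I = Finset.univ.filter (fun i : Fin (k + l) => k ≤ (i : ℕ)) :=
    fun I hsplit hcard =>
      Fin.eq_filter_le_val_of_isUpperSet (R.isUpperSet_of_rle_split hsplit) hcard
  refine ⟨⟨fun h => ?_, ?_⟩, fun I ⟨hsplit, _, hcard, _⟩ => hunique I hsplit hcard⟩
  · obtain ⟨hcross, hP, hQ⟩ := (P.ppLe_comp_iff Q R).1 h
    refine ⟨_, R.rle_split_filter_le_val_iff.2 hcross, Fin.card_compl_filter_le_val,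
      Fin.card_filter_le_val, ?_, ?_⟩
    · exact (P.ppLe_cast_restrict_iff R Fin.card_compl_filter_le_val
        (Fin.castAddOrderEmb l) (by simp)).2 hP
    · exact (Q.ppLe_cast_restrict_iff R Fin.card_filter_le_val
        (Fin.natAddOrderEmb k) (by simp)).2 hQ
  · rintro ⟨I, hsplit, hcardc, hcard, hP, hQ⟩
    obtain rfl := hunique I hsplit hcard
    refine (P.ppLe_comp_iff Q R).2 ⟨R.rle_split_filter_le_val_iff.1 hsplit, ?_, ?_⟩
    · exact (P.ppLe_cast_restrict_iff R hcardc (Fin.castAddOrderEmb l) (by simp)).1 hP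
    · exact (Q.ppLe_cast_restrict_iff R hcard (Fin.natAddOrderEmb k) (by simp)).1 hQ
end
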